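/- Let f and g be coprime integer polynomials of positive degree with gcd(L(f), L(g)) = 1. Then B(f,g), r(f,g), and |Res(f,g)| all have the same set of prime factors. -/

import Mathlib

open Polynomial

/-- The Sylvester matrix of two integer polynomials. -/
noncomputable def sylvesterMatrix (f g : Polynomial ℤ) :
    Matrix (Fin (g.natDegree + f.natDegree)) (Fin (g.natDegree + f.natDegree)) ℤ :=
  Matrix.of fun i j =>
    if (i : ℕ) < g.natDegree then
      if (i : ℕ) ≤ (j : ℕ) ∧ (j : ℕ) ≤ (i : ℕ) + f.natDegree then
        f.coeff (f.natDegree + i - j)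
      else 0
    else
      if (i : ℕ) - g.natDegree ≤ (j : ℕ) ∧ (j : ℕ) ≤ (i : ℕ) - g.natDegree + g.natDegree then
        g.coeff (g.natDegree + ((i : ℕ) - g.natDegree) - j)
      else 0

/-- The resultant of two integer polynomials, as the determinant of their Sylvester matrix. -/
noncomputable def res (f g : Polynomial ℤ) : ℤ := (sylvesterMatrix f g).det

/-- `B` is a positive common denominator for the (unique) Bezout cofactors `p, q` in `ℚ[x]`
with `deg p < deg g`, `deg q < deg f` and `p*f + q*g = 1`, i.e. `B*p, B*q` lie in `ℤ[x]`. -/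
def IsBezoutDenom (f g : Polynomial ℤ) (B : ℤ) : Prop :=
  0 < B ∧ ∃ p q : Polynomial ℚ,
    p.degree < (g.map (Int.castRingHom ℚ)).degree ∧
    q.degree < (f.map (Int.castRingHom ℚ)).degree ∧
    p * f.map (Int.castRingHom ℚ) + q * g.map (Int.castRingHom ℚ) = 1 ∧
    (∃ P : Polynomial ℤ, P.map (Int.castRingHom ℚ) = Polynomial.C (B : ℚ) * p) ∧
    (∃ Q : Polynomial ℤ, Q.map (Int.castRingHom ℚ) = Polynomial.C (B : ℚ) * q)

/-!
Let `p` be a prime. Both `B` and `Res(f, g)` lie in the ideal `(f, g) ∩ ℤ = (r)`: clear the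
denominators of the Bezout pair, resp. use the adjugate of the Sylvester matrix. Conversely, suppose
`p ∤ r`. Then `f` and `g` stay coprime modulo `p`, and since `p` misses one of the leading
coefficients, one of them keeps its degree modulo `p`. Hence `Res(f, g)` does not vanish modulo `p`,
and an integral relation `P f + Q g = B` with `deg P < deg g`, `deg Q < deg f` and `p ∣ B` forces
`p ∣ P` and `p ∣ Q`, so that `B / p` would be a smaller common denominator.
-/

open Matrix

/-- The rows of `sylvesterMatrix f g` are the columns of Mathlib's `sylvester f g`, with the
coefficients listed in descending instead of ascending order. -/
theorem sylvesterMatrix_eq_transpose_submatrix_sylvester (f g : ℤ[X]) :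
    sylvesterMatrix f g = ((sylvester f g f.natDegree g.natDegree).submatrix
      ((finCongr (Nat.add_comm _ _)).trans Fin.revPerm)
      ((finCongr (Nat.add_comm _ _)).trans Fin.revPerm))ᵀ := by
  ext i j
  simp only [transpose_apply, submatrix_apply]
  generalize hc : ((finCongr (Nat.add_comm _ _)).trans Fin.revPerm) i = c
  have hcv := congrArg Fin.val hc
  have hi := i.isLt
  have hj := j.isLt
  induction c using Fin.addCases <;>
    simp only [Fin.val_castAdd, Fin.val_natAdd, sylvesterMatrix, sylvester, of_apply,
      Fin.addCases_left, Fin.addCases_right, Set.mem_Icc, Equiv.trans_apply, finCongr_apply,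
      Fin.revPerm_apply, Fin.val_rev, Fin.val_cast] at hcv ⊢ <;>
    split_ifs <;> first | omega | (congr 1; omega)

theorem res_eq_resultant (f g : ℤ[X]) : res f g = resultant f g := by
  rw [res, sylvesterMatrix_eq_transpose_submatrix_sylvester, det_transpose,
    det_submatrix_equiv_self, resultant]

theorem Int.dvd_of_mem_ideal_of_forall_le {I : Ideal ℤ} {r s : ℤ} (hr : r ∈ I) (hrpos : 0 < r)
    (hmin : ∀ t ∈ I, 0 < t → r ≤ t) (hs : s ∈ I) : r ∣ s := by
  have hmod : s % r ∈ I := by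
    rw [Int.emod_def]
    exact I.sub_mem hs (I.mul_mem_right _ hr)
  by_contra hndvd
  have hpos : 0 < s % r := (Int.emod_nonneg s hrpos.ne').lt_of_ne'
    fun h => hndvd (Int.dvd_of_emod_eq_zero h)
  exact (hmin _ hmod hpos).not_gt (Int.emod_lt_of_pos s hrpos)

theorem isBezoutDenom_iff {f g : ℤ[X]} {B : ℤ} :
    IsBezoutDenom f g B ↔ 0 < B ∧ ∃ P Q : ℤ[X],
      P.degree < g.degree ∧ Q.degree < f.degree ∧ P * f + Q * g = C B := by
  have hρ : Function.Injective (Int.castRingHom ℚ) := Int.cast_injective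
  constructor
  · rintro ⟨hB, p, q, hp, hq, hpq, ⟨P, hP⟩, ⟨Q, hQ⟩⟩
    have hB0 : (B : ℚ) ≠ 0 := by exact_mod_cast hB.ne'
    refine ⟨hB, P, Q, ?_, ?_, ?_⟩
    · rwa [← degree_map_eq_of_injective hρ, hP, degree_C_mul hB0,
        ← degree_map_eq_of_injective hρ g]
    · rwa [← degree_map_eq_of_injective hρ, hQ, degree_C_mul hB0,
        ← degree_map_eq_of_injective hρ f]
    · apply map_injective _ hρ
      rw [Polynomial.map_add, Polynomial.map_mul, Polynomial.map_mul, hP, hQ, Polynomial.map_C,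
        eq_intCast]
      linear_combination C (B : ℚ) * hpq
  · rintro ⟨hB, P, Q, hP, hQ, hPQ⟩
    have hB0 : (B : ℚ) ≠ 0 := by exact_mod_cast hB.ne'
    have hCB : C (B : ℚ)⁻¹ * C (B : ℚ) = 1 := by rw [← C_mul, inv_mul_cancel₀ hB0, C_1]
    have hmap := congrArg (map (Int.castRingHom ℚ)) hPQ
    rw [Polynomial.map_add, Polynomial.map_mul, Polynomial.map_mul, Polynomial.map_C,
      eq_intCast] at hmap
    refine ⟨hB, C (B : ℚ)⁻¹ * P.map (Int.castRingHom ℚ), C (B : ℚ)⁻¹ * Q.map (Int.castRingHom ℚ),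
      ?_, ?_, by linear_combination C (B : ℚ)⁻¹ * hmap + hCB, ⟨P, ?_⟩, ⟨Q, ?_⟩⟩
    · rwa [degree_C_mul (inv_ne_zero hB0), degree_map_eq_of_injective hρ,
        degree_map_eq_of_injective hρ]
    · rwa [degree_C_mul (inv_ne_zero hB0), degree_map_eq_of_injective hρ,
        degree_map_eq_of_injective hρ]
    · rw [← mul_assoc, ← C_mul, mul_inv_cancel₀ hB0, C_1, one_mul]
    · rw [← mul_assoc, ← C_mul, mul_inv_cancel₀ hB0, C_1, one_mul]

namespace Polynomial

variable {R K : Type*} [CommRing R] [Field K]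

theorem eq_zero_of_mul_add_mul_eq_zero [IsDomain R] {f g a b : R[X]} (hcop : IsCoprime f g)
    (ha : a.degree < g.degree) (h : a * f + b * g = 0) : a = 0 ∧ b = 0 := by
  have ha0 : a = 0 :=
    eq_zero_of_dvd_of_degree_lt (hcop.symm.dvd_of_dvd_mul_right ⟨-b, by linear_combination h⟩) ha
  subst ha0
  simpa [ne_zero_of_degree_gt ha] using h

theorem resultant_ne_zero_of_coeff_ne_zero [IsDomain R] {f g : R[X]} {m n : ℕ}
    (hcop : IsCoprime f g) (hf : f.natDegree ≤ m) (hg : g.natDegree ≤ n)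
    (hlc : f.coeff m ≠ 0 ∨ g.coeff n ≠ 0) : resultant f g m n ≠ 0 := by
  rcases hlc with hfm | hgn
  · obtain rfl : f.natDegree = m := hf.antisymm (le_natDegree_of_ne_zero hfm)
    obtain ⟨k, rfl⟩ := Nat.exists_eq_add_of_le hg
    rw [resultant_add_right_deg (hg := le_rfl)]
    exact mul_ne_zero (pow_ne_zero _ hfm) (resultant_ne_zero f g hcop)
  · obtain rfl : g.natDegree = n := hg.antisymm (le_natDegree_of_ne_zero hgn)
    obtain ⟨k, rfl⟩ := Nat.exists_eq_add_of_le hf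
    rw [resultant_add_left_deg (hf := le_rfl)]
    exact mul_ne_zero (mul_ne_zero (pow_ne_zero _ (by simp)) (pow_ne_zero _ hgn))
      (resultant_ne_zero f g hcop)

theorem isCoprime_map_of_mul_add_mul_eq_C (φ : R →+* K) {f g u v : R[X]} {r : R}
    (huv : u * f + v * g = C r) (hr : φ r ≠ 0) : IsCoprime (f.map φ) (g.map φ) := by
  have hmap := congrArg (map φ) huv
  simp only [Polynomial.map_add, Polynomial.map_mul, map_C] at hmap
  have hCr : C (φ r)⁻¹ * C (φ r) = 1 := by rw [← C_mul, inv_mul_cancel₀ hr, C_1]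
  exact ⟨C (φ r)⁻¹ * u.map φ, C (φ r)⁻¹ * v.map φ, by linear_combination C (φ r)⁻¹ * hmap + hCr⟩

section ModularCoprime

variable (φ : R →+* K) {f g u v : R[X]} {r : R} (huv : u * f + v * g = C r) (hr : φ r ≠ 0)
  (hlc : φ f.leadingCoeff ≠ 0 ∨ φ g.leadingCoeff ≠ 0)
include huv hr hlc

theorem map_resultant_ne_zero : φ (resultant f g) ≠ 0 := by
  rw [← resultant_map_map]
  exact resultant_ne_zero_of_coeff_ne_zero (isCoprime_map_of_mul_add_mul_eq_C φ huv hr)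
    natDegree_map_le natDegree_map_le (by rw [coeff_map, coeff_map]; exact hlc)

theorem map_eq_zero_of_mul_add_mul_eq_C {P Q : R[X]} {b : R} (hP : P.degree < g.degree)
    (hQ : Q.degree < f.degree) (hPQ : P * f + Q * g = C b) (hb : φ b = 0) :
    P.map φ = 0 ∧ Q.map φ = 0 := by
  have hcop := isCoprime_map_of_mul_add_mul_eq_C φ huv hr
  have hmap := congrArg (map φ) hPQ
  simp only [Polynomial.map_add, Polynomial.map_mul, map_C, hb, C_0] at hmap
  rcases hlc with hf | hg
  · refine (eq_zero_of_mul_add_mul_eq_zero hcop.symm ?_ (by linear_combination hmap)).symm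
    rw [degree_map_eq_of_leadingCoeff_ne_zero φ hf]
    exact degree_map_le.trans_lt hQ
  · refine eq_zero_of_mul_add_mul_eq_zero hcop ?_ hmap
    rw [degree_map_eq_of_leadingCoeff_ne_zero φ hg]
    exact degree_map_le.trans_lt hP

end ModularCoprime

end Polynomial

section ModP

variable {f g u v : ℤ[X]} {r : ℤ} {p : ℕ} (hp : p.Prime) (huv : u * f + v * g = C r)
  (hpr : ¬ (p : ℤ) ∣ r) (hlc : ¬ (p : ℤ) ∣ f.leadingCoeff ∨ ¬ (p : ℤ) ∣ g.leadingCoeff)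
include hp huv hpr hlc

theorem prime_not_dvd_resultant : ¬ (p : ℤ) ∣ resultant f g := by
  have := Fact.mk hp
  simp only [← ZMod.intCast_zmod_eq_zero_iff_dvd] at hpr hlc ⊢
  exact map_resultant_ne_zero (Int.castRingHom (ZMod p)) huv hpr hlc

theorem exists_isBezoutDenom_of_prime_dvd {B : ℤ} (hB : IsBezoutDenom f g B) (hpB : (p : ℤ) ∣ B) :
    ∃ B', B = p * B' ∧ IsBezoutDenom f g B' := by
  have := Fact.mk hp
  obtain ⟨hBpos, P, Q, hP, hQ, hPQ⟩ := isBezoutDenom_iff.1 hB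
  have hφ (a : ℤ) : Int.castRingHom (ZMod p) a = 0 ↔ (p : ℤ) ∣ a :=
    ZMod.intCast_zmod_eq_zero_iff_dvd a p
  obtain ⟨hP0, hQ0⟩ := map_eq_zero_of_mul_add_mul_eq_C (Int.castRingHom (ZMod p)) huv
    (mt (hφ r).1 hpr) (hlc.imp (mt (hφ _).1) (mt (hφ _).1)) hP hQ hPQ ((hφ B).2 hpB)
  have hC_dvd {S : ℤ[X]} (hS : S.map (Int.castRingHom (ZMod p)) = 0) : C (p : ℤ) ∣ S :=
    (C_dvd_iff_dvd_coeff _ _).2 fun i => (hφ _).1 (by rw [← coeff_map, hS, coeff_zero])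
  obtain ⟨P', rfl⟩ := hC_dvd hP0
  obtain ⟨Q', rfl⟩ := hC_dvd hQ0
  obtain ⟨B', rfl⟩ := hpB
  have hp0 : (p : ℤ) ≠ 0 := by exact_mod_cast hp.ne_zero
  refine ⟨B', rfl, isBezoutDenom_iff.2
    ⟨pos_of_mul_pos_right hBpos (by positivity), P', Q', ?_, ?_, ?_⟩⟩
  · rwa [degree_C_mul hp0] at hP
  · rwa [degree_C_mul hp0] at hQ
  · apply mul_left_cancel₀ (C_ne_zero.2 hp0)
    rw [C_mul] at hPQ
    linear_combination hPQ

end ModP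

theorem statement_18_general (f g : Polynomial ℤ)
    (hf : 0 < f.natDegree)
    (r : ℤ) (hrpos : 0 < r)
    (hrmem : ∃ u v : Polynomial ℤ, u * f + v * g = Polynomial.C r)
    (hrmin : ∀ s : ℤ, 0 < s →
      (∃ u v : Polynomial ℤ, u * f + v * g = Polynomial.C s) → r ≤ s)
    (B : ℤ) (hB : IsBezoutDenom f g B)
    (hBmin : ∀ B' : ℤ, IsBezoutDenom f g B' → B ≤ B')
    (hd : Int.gcd f.leadingCoeff g.leadingCoeff = 1) :
    ∀ p : ℕ, p.Prime →
      (((p : ℤ) ∣ B ↔ (p : ℤ) ∣ r) ∧ ((p : ℤ) ∣ r ↔ (p : ℤ) ∣ |res f g|)) := by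
  have hr_dvd : ∀ s : ℤ, (∃ u v : ℤ[X], u * f + v * g = C s) → r ∣ s := fun s hs =>
    Int.dvd_of_mem_ideal_of_forall_le (I := (Ideal.span {f, g}).comap C)
      (Ideal.mem_span_pair.2 hrmem) hrpos
      (fun t ht htpos => hrmin t htpos (Ideal.mem_span_pair.1 ht)) (Ideal.mem_span_pair.2 hs)
  have hrB : r ∣ B := by
    obtain ⟨-, P, Q, -, -, hPQ⟩ := isBezoutDenom_iff.1 hB
    exact hr_dvd B ⟨P, Q, hPQ⟩
  have hrRes : r ∣ resultant f g := by
    obtain ⟨a, b, -, -, hab⟩ := exists_mul_add_mul_eq_C_resultant f g le_rfl le_rfl (.inl hf.ne')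
    exact hr_dvd _ ⟨a, b, by rw [← hab]; ring⟩
  obtain ⟨u, v, huv⟩ := hrmem
  intro p hp
  have hlc : ¬ (p : ℤ) ∣ f.leadingCoeff ∨ ¬ (p : ℤ) ∣ g.leadingCoeff := by
    rw [← not_and_or]
    rintro ⟨hpf, hpg⟩
    exact (Nat.prime_iff_prime_int.mp hp).not_isUnit
      ((Int.isCoprime_iff_gcd_eq_one.2 hd).isUnit_of_dvd' hpf hpg)
  rw [dvd_abs, res_eq_resultant]
  refine ⟨⟨fun hpB => ?_, fun hpr => hpr.trans hrB⟩, ⟨fun hpr => hpr.trans hrRes, fun hpRes => ?_⟩⟩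
  · by_contra hpr
    obtain ⟨B', rfl, hB'⟩ := exists_isBezoutDenom_of_prime_dvd hp huv hpr hlc hB hpB
    exact (hBmin B' hB').not_gt (lt_mul_left hB'.1 (by exact_mod_cast hp.one_lt))
  · by_contra hpr
    exact prime_not_dvd_resultant hp huv hpr hlc hpRes

theorem statement_18 (f g : Polynomial ℤ)
    (hf : 0 < f.natDegree) (hg : 0 < g.natDegree)
    (hcop : IsCoprime (f.map (Int.castRingHom ℚ)) (g.map (Int.castRingHom ℚ)))
    (r : ℤ) (hrpos : 0 < r)
    (hrmem : ∃ u v : Polynomial ℤ, u * f + v * g = Polynomial.C r)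
    (hrmin : ∀ s : ℤ, 0 < s →
      (∃ u v : Polynomial ℤ, u * f + v * g = Polynomial.C s) → r ≤ s)
    (B : ℤ) (hB : IsBezoutDenom f g B)
    (hBmin : ∀ B' : ℤ, IsBezoutDenom f g B' → B ≤ B')
    (hd : Int.gcd f.leadingCoeff g.leadingCoeff = 1) :
    ∀ p : ℕ, p.Prime →
      (((p : ℤ) ∣ B ↔ (p : ℤ) ∣ r) ∧ ((p : ℤ) ∣ r ↔ (p : ℤ) ∣ |res f g|)) :=
  statement_18_general f g hf r hrpos hrmem hrmin B hB hBmin hd
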